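/- Chen's identity at the first two levels for concatenation of smooth paths: if X is a smooth path on [a, b] and Y is a smooth path on [b, c] with X(b) = Y(b), and Z denotes the concatenated path on [a, c], then for all i, j ∈ {1,…,d}: S(Z)^i = S(X)^i + S(Y)^i and S(Z)^{i,j} = S(X)^{i,j} + S(X)^i · S(Y)^j + S(Y)^{i,j}. -/

import Mathlib

/-!
Away from the junction time `b` the concatenation `Z` coincides locally with `X` or with `Y`, so
its derivative is that of `X` on `(a, b)` and that of `Y` on `(b, c)`. Level one is then the
additivity of the integral over adjacent intervals. At level two, the simplex
`a < t₁ < t₂ < c` is, up to the null lines `t₁ = b` and `t₂ = b`, the disjoint union of the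
simplices over `(a, b)` and `(b, c)` and of the rectangle `(a, b) × (b, c)`, on which the
integral of `Z'ⁱ(t₁) Z'ʲ(t₂)` factorizes by Fubini.
-/

/-- Level-1 signature term of a path over `[a, b]`. -/
noncomputable def sig1 {d : ℕ} (Z : ℝ → Fin d → ℝ) (a b : ℝ) (i : Fin d) : ℝ :=
  ∫ t in a..b, deriv (fun s => Z s i) t

/-- Level-2 signature term of a path over `[a, b]`. -/
noncomputable def sig2 {d : ℕ} (Z : ℝ → Fin d → ℝ) (a b : ℝ) (i j : Fin d) : ℝ :=
  ∫ p in {p : ℝ × ℝ | a < p.1 ∧ p.1 < p.2 ∧ p.2 < b},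
    deriv (fun s => Z s i) p.1 * deriv (fun s => Z s j) p.2

open MeasureTheory Set

def openSimplex (a b : ℝ) : Set (ℝ × ℝ) := {p | a < p.1 ∧ p.1 < p.2 ∧ p.2 < b}

noncomputable def iteratedIntegral (f g : ℝ → ℝ) (a b : ℝ) : ℝ :=
  ∫ p in openSimplex a b, f p.1 * g p.2

section Simplex

variable {a b c : ℝ}

theorem measurableSet_openSimplex : MeasurableSet (openSimplex a b) :=
  (measurableSet_lt measurable_const measurable_fst).inter
    ((measurableSet_lt measurable_fst measurable_snd).inter
      (measurableSet_lt measurable_snd measurable_const))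

theorem openSimplex_subset_Ioo_prod_Ioo : openSimplex a b ⊆ Ioo a b ×ˢ Ioo a b :=
  fun _ ⟨h₁, h₂, h₃⟩ => ⟨⟨h₁, h₂.trans h₃⟩, h₁.trans h₂, h₃⟩

theorem volume_line_union_line (b : ℝ) :
    volume ((({b} : Set ℝ) ×ˢ univ) ∪ (univ ×ˢ {b})) = 0 := by
  refine measure_union_null ?_ ?_ <;> simp [Measure.volume_eq_prod, Measure.prod_prod]

theorem openSimplex_ae_eq_union (hab : a ≤ b) (hbc : b ≤ c) :
    openSimplex a c =ᵐ[volume]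
      (openSimplex a b ∪ Ioo a b ×ˢ Ioo b c ∪ openSimplex b c : Set (ℝ × ℝ)) := by
  have hsub : openSimplex a b ∪ Ioo a b ×ˢ Ioo b c ∪ openSimplex b c ⊆ openSimplex a c := by
    rintro p ((⟨h₁, h₂, h₃⟩ | ⟨⟨h₁, h₂⟩, h₃, h₄⟩) | ⟨h₁, h₂, h₃⟩)
    · exact ⟨h₁, h₂, h₃.trans_le hbc⟩
    · exact ⟨h₁, h₂.trans h₃, h₄⟩
    · exact ⟨hab.trans_lt h₁, h₂, h₃⟩
  refine ae_eq_set.2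
    ⟨measure_mono_null ?_ (volume_line_union_line b), by simp [sdiff_eq_empty.2 hsub]⟩
  rintro ⟨x, y⟩ ⟨⟨h₁, h₂, h₃⟩, hp⟩
  simp only [openSimplex, mem_union, mem_prod, mem_ofPred_eq, mem_Ioo, not_or] at hp ⊢
  simp only [mem_singleton_iff, mem_univ, and_true, true_and]
  rcases lt_trichotomy y b with hy | rfl | hy
  · exact absurd ⟨h₁, h₂, hy⟩ hp.1.1
  · exact Or.inr rfl
  rcases lt_trichotomy x b with hx | rfl | hx
  · exact absurd ⟨⟨h₁, hx⟩, hy, h₃⟩ hp.1.2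
  · exact Or.inl rfl
  · exact absurd ⟨hx, h₂, h₃⟩ hp.2

end Simplex

section Split

variable {f g : ℝ → ℝ} {a b c : ℝ}

theorem integrableOn_mul_prod {s t : Set ℝ} (hf : IntegrableOn f s) (hg : IntegrableOn g t) :
    IntegrableOn (fun p : ℝ × ℝ => f p.1 * g p.2) (s ×ˢ t) := by
  rw [IntegrableOn, Measure.volume_eq_prod, ← Measure.prod_restrict]
  exact hf.mul_prod hg

theorem iteratedIntegral_eq_add_mul_add (hab : a ≤ b) (hbc : b ≤ c)
    (hf₁ : IntervalIntegrable f volume a b) (hf₂ : IntervalIntegrable f volume b c)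
    (hg₁ : IntervalIntegrable g volume a b) (hg₂ : IntervalIntegrable g volume b c) :
    iteratedIntegral f g a c =
      iteratedIntegral f g a b + (∫ t in a..b, f t) * (∫ t in b..c, g t) +
        iteratedIntegral f g b c := by
  rw [intervalIntegrable_iff_integrableOn_Ioo_of_le hab] at hf₁ hg₁
  rw [intervalIntegrable_iff_integrableOn_Ioo_of_le hbc] at hf₂ hg₂
  have hI₁ := (integrableOn_mul_prod hf₁ hg₁).mono_set openSimplex_subset_Ioo_prod_Ioo
  have hI₂ := integrableOn_mul_prod hf₁ hg₂
  have hI₃ := (integrableOn_mul_prod hf₂ hg₂).mono_set openSimplex_subset_Ioo_prod_Ioo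
  have hdisj₁ : Disjoint (openSimplex a b) (Ioo a b ×ˢ Ioo b c) :=
    disjoint_left.2 fun _ ⟨_, _, h⟩ ⟨_, h', _⟩ => lt_asymm h h'
  have hdisj₂ : Disjoint (openSimplex a b ∪ Ioo a b ×ˢ Ioo b c) (openSimplex b c) := by
    refine disjoint_left.2 fun p hp ⟨h, _⟩ => ?_
    rcases hp with ⟨_, h₁, h₂⟩ | ⟨⟨_, h₁⟩, _⟩
    · exact lt_asymm (h₁.trans h₂) h
    · exact lt_asymm h₁ h
  have hprod : ∫ p in Ioo a b ×ˢ Ioo b c, f p.1 * g p.2 =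
      (∫ t in a..b, f t) * (∫ t in b..c, g t) := by
    rw [Measure.volume_eq_prod, setIntegral_prod_mul, intervalIntegral.integral_of_le hab,
      intervalIntegral.integral_of_le hbc, integral_Ioc_eq_integral_Ioo,
      integral_Ioc_eq_integral_Ioo]
  rw [iteratedIntegral, setIntegral_congr_set (openSimplex_ae_eq_union hab hbc),
    setIntegral_union hdisj₂ measurableSet_openSimplex (hI₁.union hI₂) hI₃,
    setIntegral_union hdisj₁ (measurableSet_Ioo.prod measurableSet_Ioo) hI₁ hI₂, hprod,
    iteratedIntegral, iteratedIntegral]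

theorem iteratedIntegral_congr {f' g' : ℝ → ℝ} (hf : EqOn f f' (Ioo a b))
    (hg : EqOn g g' (Ioo a b)) : iteratedIntegral f g a b = iteratedIntegral f' g' a b :=
  setIntegral_congr_fun measurableSet_openSimplex fun p hp =>
    have hp' := openSimplex_subset_Ioo_prod_Ioo hp
    by rw [hf hp'.1, hg hp'.2]

end Split

theorem sig2_eq_iteratedIntegral {d : ℕ} (Z : ℝ → Fin d → ℝ) (a b : ℝ) (i j : Fin d) :
    sig2 Z a b i j = iteratedIntegral (deriv fun s => Z s i) (deriv fun s => Z s j) a b :=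
  rfl

theorem chen_identity_levels_one_two_general {d : ℕ} (X Y : ℝ → Fin d → ℝ) (a b c : ℝ)
    (hab : a ≤ b) (hbc : b ≤ c) (hX : ContDiff ℝ 1 X) (hY : ContDiff ℝ 1 Y)
    (Z : ℝ → Fin d → ℝ)
    (hZ : Z = fun t => if t ≤ b then X t else Y t) :
    (∀ i : Fin d, sig1 Z a c i = sig1 X a b i + sig1 Y b c i) ∧
    (∀ i j : Fin d, sig2 Z a c i j =
      sig2 X a b i j + sig1 X a b i * sig1 Y b c j + sig2 Y b c i j) := by
  have hZX (i : Fin d) : EqOn (deriv fun s => Z s i) (deriv fun s => X s i) (Ioo a b) :=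
    (EqOn.deriv (fun s (hs : s < b) => by simp [hZ, hs.le]) isOpen_Iio).mono
      Ioo_subset_Iio_self
  have hZY (i : Fin d) : EqOn (deriv fun s => Z s i) (deriv fun s => Y s i) (Ioo b c) :=
    (EqOn.deriv (fun s (hs : b < s) => by simp [hZ, hs.not_ge]) isOpen_Ioi).mono
      Ioo_subset_Ioi_self
  have hZab (i : Fin d) : IntervalIntegrable (deriv fun s => Z s i) volume a b :=
    ((contDiff_pi.1 hX i).continuous_deriv le_rfl |>.intervalIntegrable a b).congr_uIoo
      (uIoo_of_le hab ▸ (hZX i).symm)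
  have hZbc (i : Fin d) : IntervalIntegrable (deriv fun s => Z s i) volume b c :=
    ((contDiff_pi.1 hY i).continuous_deriv le_rfl |>.intervalIntegrable b c).congr_uIoo
      (uIoo_of_le hbc ▸ (hZY i).symm)
  have hX₁ (i : Fin d) : ∫ t in a..b, deriv (fun s => Z s i) t = sig1 X a b i :=
    intervalIntegral.integral_congr_Ioo_of_le hab (hZX i)
  have hY₁ (i : Fin d) : ∫ t in b..c, deriv (fun s => Z s i) t = sig1 Y b c i :=
    intervalIntegral.integral_congr_Ioo_of_le hbc (hZY i)
  refine ⟨fun i => ?_, fun i j => ?_⟩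
  · rw [sig1, ← intervalIntegral.integral_add_adjacent_intervals (hZab i) (hZbc i), hX₁, hY₁]
  · rw [sig2_eq_iteratedIntegral Z, sig2_eq_iteratedIntegral X, sig2_eq_iteratedIntegral Y,
      iteratedIntegral_eq_add_mul_add hab hbc (hZab i) (hZbc i) (hZab j) (hZbc j), hX₁, hY₁,
      iteratedIntegral_congr (hZX i) (hZX j), iteratedIntegral_congr (hZY i) (hZY j)]

theorem chen_identity_levels_one_two {d : ℕ} (X Y : ℝ → Fin d → ℝ) (a b c : ℝ)
    (hab : a ≤ b) (hbc : b ≤ c) (hX : ContDiff ℝ 1 X) (hY : ContDiff ℝ 1 Y)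
    (hmatch : X b = Y b) (Z : ℝ → Fin d → ℝ)
    (hZ : Z = fun t => if t ≤ b then X t else Y t) :
    (∀ i : Fin d, sig1 Z a c i = sig1 X a b i + sig1 Y b c i) ∧
    (∀ i j : Fin d, sig2 Z a c i j =
      sig2 X a b i j + sig1 X a b i * sig1 Y b c j + sig2 Y b c i j) :=
  chen_identity_levels_one_two_general X Y a b c hab hbc hX hY Z hZ
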